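/- Let f : (0,∞) → ℝ be smooth, bounded, with f(r) → 1 as r → ∞ and f > 0. If (ξ, β) ∈ H²((0,∞), r dr)² satisfies the system -ξ' + (f'/f)ξ + fβ = 0 and fξ - β' - β/r = 0 (i.e., G₀*(ξ,β) = 0 where G₀* is the adjoint of G₀ = [[∂_r - f'/f, f],[f, ∂_r + 1/r]]), then β satisfies (-Δ_r + f²)β = 0, and consequently β ≡ 0 and ξ ≡ 0. -/

import Mathlib

open Set MeasureTheory

private lemma aux_tendsto (C : ℝ) :
    Filter.Tendsto (fun a : ℝ => a * (C - Real.log a)^2) (nhdsWithin 0 (Ioi 0)) (nhds 0) := by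
  have h1 : Filter.Tendsto (fun a : ℝ => Real.log a * a ^ ((1:ℝ)/2))
      (nhdsWithin 0 (Ioi 0)) (nhds 0) :=
    tendsto_log_mul_rpow_nhdsGT_zero (by norm_num)
  have h2 : Filter.Tendsto (fun a : ℝ => Real.log a * a) (nhdsWithin 0 (Ioi 0)) (nhds 0) := by
    have := tendsto_log_mul_rpow_nhdsGT_zero (r := 1) one_pos
    simpa using this
  have h3 : Filter.Tendsto (fun a : ℝ => a) (nhdsWithin 0 (Ioi 0)) (nhds 0) :=
    Filter.tendsto_id.mono_left nhdsWithin_le_nhds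
  have key : Filter.Tendsto
      (fun a : ℝ => C^2 * a - 2*C*(Real.log a * a) + (Real.log a * a ^ ((1:ℝ)/2))^2)
      (nhdsWithin 0 (Ioi 0)) (nhds 0) := by
    have := ((h3.const_mul (C^2)).sub (h2.const_mul (2*C))).add (h1.pow 2)
    simpa using this
  refine key.congr' ?_
  filter_upwards [self_mem_nhdsWithin] with a (ha : a ∈ Ioi 0)
  have ha' : (0:ℝ) < a := ha
  have hsq : (a ^ ((1:ℝ)/2))^2 = a := by
    rw [← Real.rpow_natCast (a ^ ((1:ℝ)/2)) 2, ← Real.rpow_mul ha'.le]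
    norm_num
  ring_nf
  nlinarith [hsq, sq_nonneg (Real.log a)]

/-- The measure `r dr` on `(0,∞)`. -/
noncomputable def rmeasure : Measure ℝ :=
  (volume.restrict (Set.Ioi (0:ℝ))).withDensity fun r => ENNReal.ofReal r

private lemma aux_integrable {h : ℝ → ℝ} (hm : MemLp h 2 rmeasure) :
    IntegrableOn (fun s => h s ^ 2 * s) (Ioi 0) volume := by
  have h1 : Integrable (fun x => h x ^ 2) rmeasure := hm.integrable_sq
  rw [rmeasure, integrable_withDensity_iff ENNReal.measurable_ofReal
    (by filter_upwards with x using ENNReal.ofReal_lt_top)] at h1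
  refine h1.congr ?_
  filter_upwards [ae_restrict_mem measurableSet_Ioi] with x (hx : x ∈ Ioi 0)
  rw [ENNReal.toReal_ofReal (le_of_lt hx)]

private lemma aux_interval_le {w : ℝ → ℝ} (hw : IntegrableOn w (Ioi 0) volume)
    (hnn : ∀ s ∈ Ioi (0:ℝ), 0 ≤ w s) {a b : ℝ} (ha : 0 < a) (hab : a ≤ b) :
    ∫ x in a..b, w x ≤ ∫ x in Ioi (0:ℝ), w x := by
  rw [intervalIntegral.integral_of_le hab]
  refine setIntegral_mono_set hw ?_ ?_
  · filter_upwards [ae_restrict_mem measurableSet_Ioi] with x hx using hnn x hx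
  · refine Filter.Eventually.of_forall ?_
    intro x hx
    exact lt_trans ha hx.1

/-- if `(ξ, β) ∈ H²((0,∞), r dr)²` solves the first-order system
`-ξ' + (f'/f)ξ + fβ = 0`, `fξ - β' - β/r = 0` (i.e. `G₀*(ξ,β) = 0`), with `f` smooth,
bounded, positive and `f(r) → 1` as `r → ∞`, then `(-Δ_r + f²)β = 0` and consequently
`β ≡ 0` and `ξ ≡ 0`. -/
theorem stmt6 (f : ℝ → ℝ)
    (hf : ∀ r ∈ Ioi (0:ℝ), ContDiffAt ℝ (⊤ : ℕ∞) f r)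
    (hbdd : ∃ C : ℝ, ∀ r ∈ Ioi (0:ℝ), |f r| ≤ C)
    (hfpos : ∀ r ∈ Ioi (0:ℝ), 0 < f r)
    (hflim : Filter.Tendsto f Filter.atTop (nhds 1))
    (ξ β : ℝ → ℝ)
    (hξ : ∀ r ∈ Ioi (0:ℝ), ContDiffAt ℝ (⊤ : ℕ∞) ξ r)
    (hβ : ∀ r ∈ Ioi (0:ℝ), ContDiffAt ℝ (⊤ : ℕ∞) β r)
    (hξH2 : MemLp ξ 2 rmeasure ∧ MemLp (deriv ξ) 2 rmeasure ∧
      MemLp (deriv (deriv ξ)) 2 rmeasure)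
    (hβH2 : MemLp β 2 rmeasure ∧ MemLp (deriv β) 2 rmeasure ∧
      MemLp (deriv (deriv β)) 2 rmeasure)
    (hsys1 : ∀ r ∈ Ioi (0:ℝ), -(deriv ξ r) + (deriv f r / f r) * ξ r + f r * β r = 0)
    (hsys2 : ∀ r ∈ Ioi (0:ℝ), f r * ξ r - deriv β r - β r / r = 0) :
    (∀ r ∈ Ioi (0:ℝ),
      -(deriv (deriv β) r) - deriv β r / r + (f r)^2 * β r = 0) ∧
    (∀ r ∈ Ioi (0:ℝ), β r = 0) ∧ (∀ r ∈ Ioi (0:ℝ), ξ r = 0) := by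
  classical
  -- basic regularity
  have hβd : ∀ r ∈ Ioi (0:ℝ), DifferentiableAt ℝ β r := fun r hr =>
    (hβ r hr).differentiableAt (by simp)
  have hξd : ∀ r ∈ Ioi (0:ℝ), DifferentiableAt ℝ ξ r := fun r hr =>
    (hξ r hr).differentiableAt (by simp)
  have hfd : ∀ r ∈ Ioi (0:ℝ), DifferentiableAt ℝ f r := fun r hr =>
    (hf r hr).differentiableAt (by simp)
  have hβc : ContinuousOn β (Ioi 0) := fun r hr => ((hβ r hr).continuousAt).continuousWithinAt
  have hξc : ContinuousOn ξ (Ioi 0) := fun r hr => ((hξ r hr).continuousAt).continuousWithinAt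
  have hfc : ContinuousOn f (Ioi 0) := fun r hr => ((hf r hr).continuousAt).continuousWithinAt
  have hβco : ContDiffOn ℝ (⊤ : ℕ∞) β (Ioi 0) := fun r hr => (hβ r hr).contDiffWithinAt
  have hβ'c : ContinuousOn (deriv β) (Ioi 0) :=
    hβco.continuousOn_deriv_of_isOpen isOpen_Ioi (by simp)
  -- the auxiliary function u = ξ/f and g = r β u
  set u : ℝ → ℝ := fun r => ξ r / f r with hu_def
  set g : ℝ → ℝ := fun r => r * β r * u r with hg_def
  have huc : ContinuousOn u (Ioi 0) :=
    hξc.div hfc (fun r hr => ne_of_gt (hfpos r hr))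
  have hu' : ∀ r ∈ Ioi (0:ℝ), HasDerivAt u (β r) r := by
    intro r hr
    have hfr : f r ≠ 0 := ne_of_gt (hfpos r hr)
    have hd : HasDerivAt (fun y => ξ y / f y)
        ((deriv ξ r * f r - ξ r * deriv f r) / f r ^ 2) r :=
      ((hξd r hr).hasDerivAt).div ((hfd r hr).hasDerivAt) hfr
    have h1 : deriv ξ r = (deriv f r / f r) * ξ r + f r * β r := by
      have := hsys1 r hr; linarith
    have : (deriv ξ r * f r - ξ r * deriv f r) / f r ^ 2 = β r := by
      rw [h1]; field_simp; ring
    rw [← this]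
    exact hd
  have hg' : ∀ r ∈ Ioi (0:ℝ), HasDerivAt g (r * (ξ r ^ 2 + β r ^ 2)) r := by
    intro r hr
    have hr0 : (0:ℝ) < r := hr
    have hfr : f r ≠ 0 := ne_of_gt (hfpos r hr)
    have hd : HasDerivAt (fun y => y * β y * u y)
        ((1 * β r + r * deriv β r) * u r + r * β r * β r) r :=
      (((hasDerivAt_id r).mul ((hβd r hr).hasDerivAt)).mul (hu' r hr))
    have h2 : deriv β r = f r * ξ r - β r / r := by
      have := hsys2 r hr; linarith
    have : (1 * β r + r * deriv β r) * u r + r * β r * β r = r * (ξ r ^ 2 + β r ^ 2) := by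
      rw [h2, hu_def]
      field_simp
      ring
    rw [← this]
    exact hd
  -- integrability constants
  obtain ⟨hξ2, -, -⟩ := hξH2
  obtain ⟨hβ2, hβ'2, -⟩ := hβH2
  have hIβ : IntegrableOn (fun s => β s ^ 2 * s) (Ioi 0) volume := aux_integrable hβ2
  have hIξ : IntegrableOn (fun s => ξ s ^ 2 * s) (Ioi 0) volume := aux_integrable hξ2
  have hIβ' : IntegrableOn (fun s => (deriv β) s ^ 2 * s) (Ioi 0) volume := aux_integrable hβ'2
  set K : ℝ := (∫ x in Ioi (0:ℝ), β x ^ 2 * x) + (∫ x in Ioi (0:ℝ), ξ x ^ 2 * x) +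
      (∫ x in Ioi (0:ℝ), (deriv β) x ^ 2 * x) with hK_def
  have hint_nonneg : ∀ (h : ℝ → ℝ), (0:ℝ) ≤ ∫ x in Ioi (0:ℝ), h x ^ 2 * x := by
    intro h
    refine setIntegral_nonneg measurableSet_Ioi ?_
    intro x hx
    have hx' : (0:ℝ) < x := hx
    positivity
  have hKβ : ∀ {a b : ℝ}, 0 < a → a ≤ b → ∫ x in a..b, β x ^ 2 * x ≤ K := by
    intro a b ha hab
    have := aux_interval_le hIβ (fun s hs => by have : (0:ℝ) < s := hs; positivity) ha hab
    have h1 := hint_nonneg ξ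
    have h2 := hint_nonneg (deriv β)
    rw [hK_def]; linarith
  have hKξ : ∀ {a b : ℝ}, 0 < a → a ≤ b → ∫ x in a..b, ξ x ^ 2 * x ≤ K := by
    intro a b ha hab
    have := aux_interval_le hIξ (fun s hs => by have : (0:ℝ) < s := hs; positivity) ha hab
    have h1 := hint_nonneg β
    have h2 := hint_nonneg (deriv β)
    rw [hK_def]; linarith
  have hKβ' : ∀ {a b : ℝ}, 0 < a → a ≤ b → ∫ x in a..b, (deriv β) x ^ 2 * x ≤ K := by
    intro a b ha hab
    have := aux_interval_le hIβ' (fun s hs => by have : (0:ℝ) < s := hs; positivity) ha hab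
    have h1 := hint_nonneg β
    have h2 := hint_nonneg ξ
    rw [hK_def]; linarith
  have hK0 : 0 ≤ K := by
    have h1 := hint_nonneg β
    have h2 := hint_nonneg ξ
    have h3 := hint_nonneg (deriv β)
    rw [hK_def]; linarith
  -- subsets of Ioi 0
  have hsub : ∀ {a b : ℝ}, 0 < a → a ≤ b → uIcc a b ⊆ Ioi 0 := by
    intro a b ha hab x hx
    rcases hx with ⟨h1, -⟩
    have : min a b = a := min_eq_left hab
    exact lt_of_lt_of_le ha (this ▸ h1)
  -- fundamental theorem: g b - g a = ∫ s (ξ² + β²)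
  have hftc : ∀ {a b : ℝ}, 0 < a → a ≤ b →
      ∫ s in a..b, s * (ξ s ^ 2 + β s ^ 2) = g b - g a := by
    intro a b ha hab
    refine intervalIntegral.integral_eq_sub_of_hasDerivAt ?_ ?_
    · intro x hx
      exact hg' x (hsub ha hab hx)
    · refine ContinuousOn.intervalIntegrable ?_
      refine ContinuousOn.mono ?_ (hsub ha hab)
      exact continuousOn_id.mul ((hξc.pow 2).add (hβc.pow 2))
  have hgmono : ∀ {a b : ℝ}, 0 < a → a ≤ b → g a ≤ g b := by
    intro a b ha hab
    have h1 := hftc ha hab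
    have h2 : 0 ≤ ∫ s in a..b, s * (ξ s ^ 2 + β s ^ 2) := by
      refine intervalIntegral.integral_nonneg hab ?_
      intro x hx
      have hx0 : 0 < x := lt_of_lt_of_le ha hx.1
      positivity
    linarith
  -- pointwise log bounds near 0
  have hlogbound : ∀ (h h' : ℝ → ℝ), ContinuousOn h' (Ioi 0) →
      (∀ r ∈ Ioi (0:ℝ), HasDerivAt h (h' r) r) →
      (∀ {a b : ℝ}, 0 < a → a ≤ b → ∫ x in a..b, h' x ^ 2 * x ≤ K) →
      ∀ a ∈ Ioo (0:ℝ) 1, |h a| ≤ |h 1| + (K - Real.log a) / 2 := by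
    intro h h' hc hd hKb a ha
    obtain ⟨ha0, ha1⟩ := ha
    have hsub1 : uIcc a 1 ⊆ Ioi 0 := hsub ha0 ha1.le
    have hint : IntervalIntegrable h' volume a 1 :=
      (hc.mono hsub1).intervalIntegrable
    have hftc1 : ∫ x in a..1, h' x = h 1 - h a := by
      refine intervalIntegral.integral_eq_sub_of_hasDerivAt ?_ hint
      intro x hx; exact hd x (hsub1 hx)
    have habs : |∫ x in a..1, h' x| ≤ ∫ x in a..1, |h' x| :=
      intervalIntegral.abs_integral_le_integral_abs ha1.le
    have hptwise : ∀ x ∈ Icc a 1, |h' x| ≤ (h' x ^ 2 * x + 1 / x) / 2 := by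
      intro x hx
      have hx0 : 0 < x := lt_of_lt_of_le ha0 hx.1
      rw [le_div_iff₀ (by norm_num : (0:ℝ) < 2)]
      have key : |h' x| * 2 * x ≤ (h' x ^ 2 * x + 1 / x) * x := by
        have hexp : (h' x ^ 2 * x + 1 / x) * x = h' x ^ 2 * x ^ 2 + 1 := by
          field_simp
        rw [hexp]
        nlinarith [sq_nonneg (x * |h' x| - 1), sq_abs (h' x), abs_nonneg (h' x)]
      exact le_of_mul_le_mul_right key hx0
    have hmono : ∫ x in a..1, |h' x| ≤ ∫ x in a..1, (h' x ^ 2 * x + 1 / x) / 2 := by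
      refine intervalIntegral.integral_mono_on ha1.le hint.abs ?_ hptwise
      refine ContinuousOn.intervalIntegrable ?_
      refine ContinuousOn.mono ?_ hsub1
      refine ContinuousOn.div_const ?_ 2
      exact (((hc.pow 2).mul continuousOn_id).add
        (continuousOn_const.div continuousOn_id (fun x hx => ne_of_gt hx)))
    have hsplit : ∫ x in a..1, (h' x ^ 2 * x + 1 / x) / 2
        = ((∫ x in a..1, h' x ^ 2 * x) + ∫ x in a..1, 1 / x) / 2 := by
      rw [← intervalIntegral.integral_add]
      · rw [intervalIntegral.integral_div]
      · refine ContinuousOn.intervalIntegrable ?_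
        exact ((hc.pow 2).mul continuousOn_id).mono hsub1
      · refine ContinuousOn.intervalIntegrable ?_
        refine ContinuousOn.mono ?_ hsub1
        exact continuousOn_const.div continuousOn_id (fun x hx => ne_of_gt hx)
    have hlog : ∫ x in a..1, 1 / x = -Real.log a := by
      rw [integral_one_div]
      · rw [one_div, Real.log_inv]
      · intro hmem
        exact absurd (hsub1 hmem) (by simp)
    have hK1 : ∫ x in a..1, h' x ^ 2 * x ≤ K := hKb ha0 ha1.le
    have : |h 1 - h a| ≤ (K - Real.log a) / 2 := by
      rw [← hftc1]
      refine le_trans habs (le_trans hmono ?_)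
      rw [hsplit, hlog]
      linarith
    have htri : |h a| ≤ |h 1| + |h 1 - h a| := by
      have h1 := abs_sub_abs_le_abs_sub (h a) (h 1)
      have h2 := abs_sub_comm (h a) (h 1)
      rw [h2] at h1
      linarith
    linarith
  -- log bounds for β and u
  have hβbound := hlogbound β (deriv β) hβ'c (fun r hr => (hβd r hr).hasDerivAt)
    (fun {a b} ha hab => hKβ' ha hab)
  have hubound := hlogbound u β hβc hu' (fun {a b} ha hab => hKβ ha hab)
  set C0 : ℝ := |β 1| + |u 1| + K / 2 with hC0
  have hbound : ∀ a ∈ Ioo (0:ℝ) 1, |g a| ≤ a * (C0 - Real.log a)^2 := by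
    intro a ha
    obtain ⟨ha0, ha1⟩ := ha
    have hloga : Real.log a ≤ 0 := Real.log_nonpos ha0.le ha1.le
    have hb1 := hβbound a ⟨ha0, ha1⟩
    have hb2 := hubound a ⟨ha0, ha1⟩
    have habsu : (0:ℝ) ≤ |u 1| := abs_nonneg _
    have habsb : (0:ℝ) ≤ |β 1| := abs_nonneg _
    have h1 : |β a| ≤ C0 - Real.log a := by rw [hC0]; linarith
    have h2 : |u a| ≤ C0 - Real.log a := by rw [hC0]; linarith
    have hD0 : 0 ≤ C0 - Real.log a := le_trans (abs_nonneg _) h1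
    have hga : |g a| = a * (|β a| * |u a|) := by
      rw [hg_def]
      rw [abs_mul, abs_mul, abs_of_pos ha0, mul_assoc]
    calc |g a| = a * (|β a| * |u a|) := hga
      _ ≤ a * ((C0 - Real.log a) * (C0 - Real.log a)) := by
          refine mul_le_mul_of_nonneg_left ?_ ha0.le
          exact mul_le_mul h1 h2 (abs_nonneg _) hD0
      _ = a * (C0 - Real.log a)^2 := by ring
  -- g is nonnegative
  have hg_nonneg : ∀ r ∈ Ioi (0:ℝ), 0 ≤ g r := by
    intro r hr
    have hr0 : (0:ℝ) < r := hr
    have ht : Filter.Tendsto (fun a : ℝ => -(a * (C0 - Real.log a)^2))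
        (nhdsWithin 0 (Ioi 0)) (nhds 0) := by
      simpa using (aux_tendsto C0).neg
    refine le_of_tendsto ht ?_
    have hmem : Ioo (0:ℝ) (min r 1) ∈ nhdsWithin (0:ℝ) (Ioi 0) :=
      Ioo_mem_nhdsGT_of_mem ⟨le_refl 0, lt_min hr0 one_pos⟩
    filter_upwards [hmem] with a ha
    obtain ⟨ha0, ham⟩ := ha
    have ha1 : a < 1 := lt_of_lt_of_le ham (min_le_right _ _)
    have har : a ≤ r := le_of_lt (lt_of_lt_of_le ham (min_le_left _ _))
    have hb := hbound a ⟨ha0, ha1⟩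
    have hm := hgmono ha0 har
    have h2 := neg_abs_le (g a)
    linarith
  -- g is nonpositive
  have hg_nonpos : ∀ r ∈ Ioi (0:ℝ), g r ≤ 0 := by
    intro r₀ hr₀
    by_contra hcon
    push_neg at hcon
    have hcpos : 0 < g r₀ := hcon
    set c : ℝ := g r₀ with hc_def
    have hev : ∀ᶠ b in Filter.atTop, (1:ℝ)/2 ≤ f b :=
      hflim.eventually (eventually_ge_nhds (by norm_num))
    obtain ⟨B₀, hB₀⟩ := Filter.eventually_atTop.mp hev
    set B : ℝ := max B₀ r₀ with hB_def
    have hBr : r₀ ≤ B := le_max_right _ _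
    have hr₀0 : (0:ℝ) < r₀ := hr₀
    have hB0 : (0:ℝ) < B := lt_of_lt_of_le hr₀0 hBr
    set T : ℝ := B + (2*K+1)/c with hT_def
    have hdiv : 0 < (2*K+1)/c := div_pos (by linarith) hcpos
    have hBT : B ≤ T := by rw [hT_def]; linarith
    have hpt : ∀ s ∈ Icc B T, c ≤ s * (ξ s ^ 2 + β s ^ 2) := by
      intro s hs
      have hsB : B ≤ s := hs.1
      have hs0 : (0:ℝ) < s := lt_of_lt_of_le hB0 hsB
      have hsIoi : s ∈ Ioi (0:ℝ) := hs0
      have hf2 : 1/2 ≤ f s := hB₀ s (le_trans (le_max_left _ _) hsB)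
      have hfs : 0 < f s := hfpos s hsIoi
      have hgs : c ≤ g s := hgmono hr₀0 (le_trans hBr hsB)
      have hβξ : β s * ξ s ≤ f s * (ξ s ^ 2 + β s ^ 2) := by
        nlinarith [sq_nonneg (β s - ξ s), sq_nonneg (ξ s), sq_nonneg (β s), hf2]
      have h1 : β s * (ξ s / f s) ≤ ξ s ^ 2 + β s ^ 2 := by
        calc β s * (ξ s / f s) = (β s * ξ s) / f s := by ring
          _ ≤ (f s * (ξ s ^ 2 + β s ^ 2)) / f s := by
              exact div_le_div_of_nonneg_right hβξ hfs.le
          _ = ξ s ^ 2 + β s ^ 2 := by field_simp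
      have hgs2 : g s = s * (β s * (ξ s / f s)) := by
        rw [hg_def]; simp only [hu_def]; ring
      have : g s ≤ s * (ξ s ^ 2 + β s ^ 2) := by
        rw [hgs2]
        exact mul_le_mul_of_nonneg_left h1 hs0.le
      linarith
    have hcont : ContinuousOn (fun s => s * (ξ s ^ 2 + β s ^ 2)) (uIcc B T) :=
      (continuousOn_id.mul ((hξc.pow 2).add (hβc.pow 2))).mono (hsub hB0 hBT)
    have hint1 : ∫ s in B..T, (c:ℝ) ≤ ∫ s in B..T, s * (ξ s ^ 2 + β s ^ 2) :=
      intervalIntegral.integral_mono_on hBT intervalIntegrable_const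
        hcont.intervalIntegrable hpt
    have hval : ∫ s in B..T, (c:ℝ) = c * (T - B) := by
      simp [intervalIntegral.integral_const]
      ring
    have hsplit2 : ∫ s in B..T, s * (ξ s ^ 2 + β s ^ 2)
        = (∫ s in B..T, ξ s ^ 2 * s) + ∫ s in B..T, β s ^ 2 * s := by
      rw [← intervalIntegral.integral_add]
      · apply intervalIntegral.integral_congr
        intro s hs
        ring
      · exact (((hξc.pow 2).mul continuousOn_id).mono (hsub hB0 hBT)).intervalIntegrable
      · exact (((hβc.pow 2).mul continuousOn_id).mono (hsub hB0 hBT)).intervalIntegrable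
    have h2K : ∫ s in B..T, s * (ξ s ^ 2 + β s ^ 2) ≤ 2 * K := by
      rw [hsplit2]
      have := hKξ hB0 hBT
      have := hKβ hB0 hBT
      linarith
    have hTB : c * (T - B) = 2*K + 1 := by
      rw [hT_def]
      field_simp
      ring
    rw [hval] at hint1
    rw [hTB] at hint1
    linarith
  -- conclusion: everything vanishes
  have hzero : ∀ r ∈ Ioi (0:ℝ), ξ r = 0 ∧ β r = 0 := by
    intro r hr
    have hr0 : (0:ℝ) < r := hr
    have hevg : g =ᶠ[nhds r] (fun _ => (0:ℝ)) := by
      filter_upwards [isOpen_Ioi.mem_nhds hr] with x hx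
      exact le_antisymm (hg_nonpos x hx) (hg_nonneg x hx)
    have hd0 : HasDerivAt g 0 r :=
      HasDerivAt.congr_of_eventuallyEq (hasDerivAt_const r 0) hevg
    have huniq : r * (ξ r ^ 2 + β r ^ 2) = 0 := (hg' r hr).unique hd0
    have hsum : ξ r ^ 2 + β r ^ 2 = 0 :=
      (mul_eq_zero.mp huniq).resolve_left hr0.ne'
    have hξr : ξ r ^ 2 = 0 ∧ β r ^ 2 = 0 :=
      (add_eq_zero_iff_of_nonneg (sq_nonneg _) (sq_nonneg _)).mp hsum
    exact ⟨pow_eq_zero_iff two_ne_zero |>.mp hξr.1, pow_eq_zero_iff two_ne_zero |>.mp hξr.2⟩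
  have hβ0 : ∀ r ∈ Ioi (0:ℝ), β r = 0 := fun r hr => (hzero r hr).2
  have hξ0 : ∀ r ∈ Ioi (0:ℝ), ξ r = 0 := fun r hr => (hzero r hr).1
  have hβ'0 : ∀ r ∈ Ioi (0:ℝ), deriv β r = 0 := by
    intro r hr
    have hev : β =ᶠ[nhds r] (fun _ => (0:ℝ)) := by
      filter_upwards [isOpen_Ioi.mem_nhds hr] with x hx using hβ0 x hx
    rw [hev.deriv_eq]
    simp
  have hβ''0 : ∀ r ∈ Ioi (0:ℝ), deriv (deriv β) r = 0 := by
    intro r hr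
    have hev : deriv β =ᶠ[nhds r] (fun _ => (0:ℝ)) := by
      filter_upwards [isOpen_Ioi.mem_nhds hr] with x hx using hβ'0 x hx
    rw [hev.deriv_eq]
    simp
  refine ⟨?_, hβ0, hξ0⟩
  intro r hr
  rw [hβ''0 r hr, hβ'0 r hr, hβ0 r hr]
  simp
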